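/- (Fourier–Motzkin elimination for cones) Let Y = {y₁, …, y_s} be a finite set of vectors in ℝᵈ, let C = cone(Y), and fix k with 1 ≤ k ≤ d. Let H_k = {y ∈ ℝᵈ : y_k = 0} and define Y^{/k} = {yᵢ : y_{ik} = 0} ∪ {y_{ik}·yⱼ − y_{jk}·yᵢ : y_{ik} > 0 and y_{jk} < 0}. Then C ∩ H_k = cone(Y^{/k}). -/

import Mathlib

open RealInnerProductSpace

/-- The cone (set of nonnegative linear combinations) generated by the vectors
`y 0, …, y (s-1)`. -/
def coneOf {d s : ℕ} (y : Fin s → EuclideanSpace ℝ (Fin d)) :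
    Set (EuclideanSpace ℝ (Fin d)) :=
  {x | ∃ t : Fin s → ℝ, (∀ i, 0 ≤ t i) ∧ x = ∑ i, t i • y i}

/-- The cone (set of nonnegative linear combinations) of a set `S` of vectors. -/
def setCone {d : ℕ} (S : Set (EuclideanSpace ℝ (Fin d))) :
    Set (EuclideanSpace ℝ (Fin d)) :=
  {x | ∃ (m : ℕ) (c : Fin m → ℝ) (z : Fin m → EuclideanSpace ℝ (Fin d)),
    (∀ i, 0 ≤ c i) ∧ (∀ i, z i ∈ S) ∧ x = ∑ i, c i • z i}

/-!
Write a point of `cone(Y) ∩ ker f` as `∑ tᵢ yᵢ` with `tᵢ ≥ 0` and split the sum according to the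
sign of `f yᵢ`. The terms with `f yᵢ = 0` are generators of `Y^{/f}` already. Over
`P = {f yᵢ > 0}` and `N = {f yⱼ < 0}` the masses `A = ∑_P tᵢ f yᵢ` and `∑_N tⱼ f yⱼ` cancel, and
if `A > 0` then `∑_P tᵢ yᵢ + ∑_N tⱼ yⱼ = ∑_{i ∈ P, j ∈ N} (tᵢ tⱼ / A) (f yᵢ • yⱼ - f yⱼ • yᵢ)`,
while if `A = 0` all these `tᵢ` vanish.
-/

open Finset Set

namespace Finset
variable {ι α M : Type*} [LinearOrder α] [Zero α] [AddCommMonoid M]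

theorem sum_eq_sum_filter_zero_add_pos_add_neg (s : Finset ι) (a : ι → α) (g : ι → M) :
    ∑ i ∈ s, g i =
      ∑ i ∈ s with a i = 0, g i + (∑ i ∈ s with 0 < a i, g i + ∑ i ∈ s with a i < 0, g i) := by
  rw [← sum_filter_add_sum_filter_not s (a · = 0),
    ← sum_filter_add_sum_filter_not (s.filter (a · ≠ 0)) (0 < a ·), filter_filter, filter_filter]
  congr 3 <;> ext i <;> simp only [mem_filter, and_congr_right_iff] <;> intro <;> grind

variable {𝕜 E : Type*} [Field 𝕜] [AddCommGroup E] [Module 𝕜 E]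

theorem sum_sum_div_smul_sub_smul {P N : Finset ι} {A : 𝕜} (hA : A ≠ 0) (a t : ι → 𝕜)
    (y : ι → E) (hP : ∑ i ∈ P, t i * a i = A) (hN : ∑ j ∈ N, t j * a j = -A) :
    ∑ i ∈ P, ∑ j ∈ N, (t i * t j / A) • (a i • y j - a j • y i) =
      ∑ i ∈ P, t i • y i + ∑ j ∈ N, t j • y j := by
  calc _ = ∑ j ∈ N, ((∑ i ∈ P, t i * a i) * (t j / A)) • y j
        - ∑ i ∈ P, ((∑ j ∈ N, t j * a j) * (t i / A)) • y i := by
        simp_rw [smul_sub, smul_smul, sum_sub_distrib, sum_mul, sum_smul]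
        rw [sum_comm]
        congr 1 <;> refine sum_congr rfl fun _ _ => sum_congr rfl fun _ _ => ?_ <;>
          congr 1 <;> ring
    _ = _ := by
        rw [hP, hN]
        simp only [mul_div_cancel₀ _ hA, neg_mul, neg_smul, sum_neg_distrib, sub_neg_eq_add,
          add_comm]

end Finset

namespace PointedCone
variable {ι 𝕜 E : Type*} [Field 𝕜] [LinearOrder 𝕜] [IsStrictOrderedRing 𝕜]
  [AddCommGroup E] [Module 𝕜 E]

/-- The set `Y^{/k}`, with the coordinate `y ↦ y_k` generalized to a linear functional `f`. -/
def fourierMotzkinGenerators (f : E →ₗ[𝕜] 𝕜) (y : ι → E) : Set E :=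
  {z | ∃ i, f (y i) = 0 ∧ z = y i} ∪
    {z | ∃ i j, 0 < f (y i) ∧ f (y j) < 0 ∧ z = f (y i) • y j - f (y j) • y i}

variable {f : E →ₗ[𝕜] 𝕜} {y : ι → E}

theorem sum_pos_add_sum_neg_mem_hull {t : ι → 𝕜} (ht : ∀ i, 0 ≤ t i) {P N : Finset ι}
    (hP : ∀ i ∈ P, 0 < f (y i)) (hN : ∀ j ∈ N, f (y j) < 0)
    (h : ∑ i ∈ P, t i * f (y i) + ∑ j ∈ N, t j * f (y j) = 0) :
    ∑ i ∈ P, t i • y i + ∑ j ∈ N, t j • y j ∈ hull 𝕜 (fourierMotzkinGenerators f y) := by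
  set A := ∑ i ∈ P, t i * f (y i)
  have hA : 0 ≤ A := sum_nonneg fun i hi => mul_nonneg (ht i) (hP i hi).le
  rcases hA.eq_or_lt with hA0 | hApos
  · have hPt : ∀ i ∈ P, t i = 0 := fun i hi => by
      have := (sum_eq_zero_iff_of_nonneg fun i hi => mul_nonneg (ht i) (hP i hi).le).1
        hA0.symm i hi
      exact (mul_eq_zero.1 this).resolve_right (hP i hi).ne'
    have hNt : ∀ j ∈ N, t j = 0 := fun j hj => by
      have := (sum_eq_zero_iff_of_nonpos fun j hj =>
        mul_nonpos_of_nonneg_of_nonpos (ht j) (hN j hj).le).1 (by linear_combination h + hA0) j hj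
      exact (mul_eq_zero.1 this).resolve_right (hN j hj).ne
    rw [sum_eq_zero fun i hi => by rw [hPt i hi, zero_smul],
      sum_eq_zero fun j hj => by rw [hNt j hj, zero_smul], add_zero]
    exact zero_mem _
  · rw [← sum_sum_div_smul_sub_smul hApos.ne' (fun i => f (y i)) t y rfl (by linear_combination h)]
    refine sum_mem fun i hi => sum_mem fun j hj =>
      smul_mem _ (div_nonneg (mul_nonneg (ht i) (ht j)) hA) ?_
    exact subset_hull (Or.inr ⟨i, j, hP i hi, hN j hj, rfl⟩)

theorem mem_hull_of_mem_hull_range_of_map_eq_zero [Fintype ι] {x : E}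
    (hx : x ∈ hull 𝕜 (range y)) (hfx : f x = 0) :
    x ∈ hull 𝕜 (fourierMotzkinGenerators f y) := by
  obtain ⟨c, rfl⟩ := (Submodule.mem_span_range_iff_exists_fun _).1 hx
  simp_rw [← Nonneg.coe_smul] at hfx ⊢
  have hc : ∀ i, 0 ≤ (c i : 𝕜) := fun i => (c i).2
  have hfc : ∑ i, (c i : 𝕜) * f (y i) = 0 := by
    simpa only [map_sum, map_smul, smul_eq_mul] using hfx
  rw [sum_eq_sum_filter_zero_add_pos_add_neg univ (fun i => f (y i))] at hfc ⊢
  rw [sum_eq_zero (fun i hi => by rw [(mem_filter.1 hi).2, mul_zero]), zero_add] at hfc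
  refine add_mem (sum_mem fun i hi => smul_mem _ (hc i) ?_)
    (sum_pos_add_sum_neg_mem_hull hc (fun i hi => (mem_filter.1 hi).2)
      (fun i hi => (mem_filter.1 hi).2) hfc)
  exact subset_hull (Or.inl ⟨i, (mem_filter.1 hi).2, rfl⟩)

theorem hull_range_inf_ker_eq_hull_fourierMotzkinGenerators [Fintype ι] (f : E →ₗ[𝕜] 𝕜)
    (y : ι → E) :
    hull 𝕜 (range y) ⊓ ofSubmodule (LinearMap.ker f) = hull 𝕜 (fourierMotzkinGenerators f y) := by
  refine le_antisymm (fun x ⟨hx, hfx⟩ => mem_hull_of_mem_hull_range_of_map_eq_zero hx hfx) ?_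
  refine Submodule.span_le.2 ?_
  rintro _ (⟨i, hi, rfl⟩ | ⟨i, j, hi, hj, rfl⟩)
  · exact ⟨subset_hull (mem_range_self i), hi⟩
  · refine ⟨?_, ?_⟩
    · rw [sub_eq_add_neg, ← neg_smul]
      exact add_mem (smul_mem _ hi.le (subset_hull (mem_range_self j)))
        (smul_mem _ (neg_nonneg.2 hj.le) (subset_hull (mem_range_self i)))
    · simp [mul_comm]

end PointedCone

open PointedCone

theorem coneOf_eq_hull {d s : ℕ} (y : Fin s → EuclideanSpace ℝ (Fin d)) :
    coneOf y = hull ℝ (range y) := by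
  ext x
  rw [SetLike.mem_coe, Submodule.mem_span_range_iff_exists_fun]
  constructor
  · rintro ⟨t, ht, rfl⟩
    exact ⟨fun i => ⟨t i, ht i⟩, rfl⟩
  · rintro ⟨c, rfl⟩
    exact ⟨fun i => c i, fun i => (c i).2, rfl⟩

theorem setCone_eq_hull {d : ℕ} (S : Set (EuclideanSpace ℝ (Fin d))) :
    setCone S = hull ℝ S := by
  ext x
  rw [SetLike.mem_coe, Submodule.mem_span_set']
  constructor
  · rintro ⟨m, c, z, hc, hz, rfl⟩
    exact ⟨m, fun i => ⟨c i, hc i⟩, fun i => ⟨z i, hz i⟩, rfl⟩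
  · rintro ⟨m, c, z, rfl⟩
    exact ⟨m, fun i => c i, fun i => z i, fun i => (c i).2, fun i => (z i).2, rfl⟩

/-- (Fourier–Motzkin elimination for cones.) If `C = cone{y₁, …, y_s} ⊆ ℝᵈ` then
the intersection of `C` with the hyperplane `H_k = {y | y_k = 0}` is the cone
generated by `Y^{/k} = {yᵢ : y_{ik} = 0} ∪ {y_{ik}·yⱼ − y_{jk}·yᵢ : y_{ik} > 0, y_{jk} < 0}`. -/
theorem fourier_motzkin_elimination (d s : ℕ)
    (y : Fin s → EuclideanSpace ℝ (Fin d)) (k : Fin d) :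
    coneOf y ∩ {x : EuclideanSpace ℝ (Fin d) | x k = 0} =
      setCone ({z | ∃ i, y i k = 0 ∧ z = y i} ∪
        {z | ∃ i j, 0 < y i k ∧ y j k < 0 ∧
          z = (y i k) • y j - (y j k) • y i}) := by
  rw [coneOf_eq_hull, setCone_eq_hull]
  exact congrArg SetLike.coe
    (hull_range_inf_ker_eq_hull_fourierMotzkinGenerators (EuclideanSpace.proj k).toLinearMap y)
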